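/- Let Ω ⊆ ℝ² be open and convex, let ν ∈ ℝ, let f : Ω → ℝ be of class C², and let w₀, w₁, w₂ : Ω → ℝ be functions of class C⁴ on Ω satisfying ∇²w₂ + 2∂ₓᵧw₁ = 0 and ∇²w₀ + ∂ₓₓw₁ − ∂ᵧᵧw₁ = 0 on Ω. Define u = ∂ₓw₀ + ∂ₓw₁ + ∂ᵧw₂ and v = ∂ᵧw₀ − ∂ᵧw₁ − ∂ₓw₂. Then there exists a differentiable function P : Ω → ℝ such that on Ω: ν∇²u − u ∂ₓu − v ∂ᵧu − ∂ₓP + ∂ₓf = 0, ν∇²v − u ∂ₓv − v ∂ᵧv − ∂ᵧP + ∂ᵧf = 0, and ∂ₓu + ∂ᵧv = 0; that is, (u, v, P) solves the time-independent incompressible Navier–Stokes system with external force (∂ₓf, ∂ᵧf). -/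

import Mathlib

/-!
Both the divergence ∂ₓu + ∂ᵧv and the curl ∂ᵧu − ∂ₓv of the velocity field are second-order
expressions in w₀, w₁, w₂ which, after commuting mixed partials, are exactly the left-hand sides
of the two hypotheses; so the field is divergence- and curl-free. Such a field is harmonic, since
∇²u = ∂ₓ(∂ₓu + ∂ᵧv) + ∂ᵧ(∂ᵧu − ∂ₓv) and similarly for v, which kills the viscous term, and
curl-freeness turns the convective term into a gradient: (u∂ₓ + v∂ᵧ)(u, v) = ∇((u² + v²)/2).
Hence the Bernoulli pressure P = f − (u² + v²)/2 solves the system.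
-/

/-- Partial derivative along the first coordinate direction. -/
noncomputable def pdx (w : ℝ × ℝ → ℝ) : ℝ × ℝ → ℝ := fun p => fderiv ℝ w p (1, 0)

/-- Partial derivative along the second coordinate direction. -/
noncomputable def pdy (w : ℝ × ℝ → ℝ) : ℝ × ℝ → ℝ := fun p => fderiv ℝ w p (0, 1)

/-- Laplacian ∇²w = ∂ₓₓw + ∂ᵧᵧw. -/
noncomputable def lap (w : ℝ × ℝ → ℝ) : ℝ × ℝ → ℝ := fun p => pdx (pdx w) p + pdy (pdy w) p

section PartialDerivatives

variable {Ω : Set (ℝ × ℝ)} {w a b : ℝ × ℝ → ℝ} {p : ℝ × ℝ}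

theorem pdx_add (ha : DifferentiableAt ℝ a p) (hb : DifferentiableAt ℝ b p) :
    pdx (fun q => a q + b q) p = pdx a p + pdx b p := by
  simp [pdx, fderiv_fun_add ha hb]

theorem pdy_add (ha : DifferentiableAt ℝ a p) (hb : DifferentiableAt ℝ b p) :
    pdy (fun q => a q + b q) p = pdy a p + pdy b p := by
  simp [pdy, fderiv_fun_add ha hb]

theorem pdx_sub (ha : DifferentiableAt ℝ a p) (hb : DifferentiableAt ℝ b p) :
    pdx (fun q => a q - b q) p = pdx a p - pdx b p := by
  simp [pdx, fderiv_fun_sub ha hb]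

theorem pdy_sub (ha : DifferentiableAt ℝ a p) (hb : DifferentiableAt ℝ b p) :
    pdy (fun q => a q - b q) p = pdy a p - pdy b p := by
  simp [pdy, fderiv_fun_sub ha hb]

theorem pdx_neg : pdx (fun q => -a q) p = -pdx a p := by
  simp [pdx, fderiv_fun_neg]

theorem pdy_neg : pdy (fun q => -a q) p = -pdy a p := by
  simp [pdy, fderiv_fun_neg]

theorem Set.EqOn.pdx_eq (hΩ : IsOpen Ω) (h : Set.EqOn a b Ω) (hp : p ∈ Ω) :
    pdx a p = pdx b p := by
  simp only [pdx, (Filter.eventuallyEq_of_mem (hΩ.mem_nhds hp) h).fderiv_eq]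

theorem Set.EqOn.pdy_eq (hΩ : IsOpen Ω) (h : Set.EqOn a b Ω) (hp : p ∈ Ω) :
    pdy a p = pdy b p := by
  simp only [pdy, (Filter.eventuallyEq_of_mem (hΩ.mem_nhds hp) h).fderiv_eq]

theorem ContDiffOn.pdx {m n : WithTop ℕ∞} (hΩ : IsOpen Ω) (h : ContDiffOn ℝ n w Ω)
    (hmn : m + 1 ≤ n) : ContDiffOn ℝ m (pdx w) Ω :=
  (h.fderiv_of_isOpen hΩ hmn).clm_apply contDiffOn_const

theorem ContDiffOn.pdy {m n : WithTop ℕ∞} (hΩ : IsOpen Ω) (h : ContDiffOn ℝ n w Ω)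
    (hmn : m + 1 ≤ n) : ContDiffOn ℝ m (pdy w) Ω :=
  (h.fderiv_of_isOpen hΩ hmn).clm_apply contDiffOn_const

theorem ContDiffAt.differentiableAt_fderiv (h : ContDiffAt ℝ 2 w p) :
    DifferentiableAt ℝ (fderiv ℝ w) p :=
  (h.fderiv_right (m := 1) (by norm_num)).differentiableAt one_ne_zero

theorem ContDiffAt.differentiableAt_pdx (h : ContDiffAt ℝ 2 w p) :
    DifferentiableAt ℝ (pdx w) p :=
  h.differentiableAt_fderiv.clm_apply (differentiableAt_const _)

theorem ContDiffAt.differentiableAt_pdy (h : ContDiffAt ℝ 2 w p) :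
    DifferentiableAt ℝ (pdy w) p :=
  h.differentiableAt_fderiv.clm_apply (differentiableAt_const _)

theorem fderiv_fderiv_apply (h : DifferentiableAt ℝ (fderiv ℝ w) p) (e e' : ℝ × ℝ) :
    fderiv ℝ (fun q => fderiv ℝ w q e') p e = fderiv ℝ (fderiv ℝ w) p e e' := by
  rw [fderiv_clm_apply h (differentiableAt_const _)]
  simp

theorem ContDiffAt.pdx_pdy_comm (h : ContDiffAt ℝ 2 w p) : pdx (pdy w) p = pdy (pdx w) p := by
  change fderiv ℝ (fun q => fderiv ℝ w q (0, 1)) p (1, 0)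
    = fderiv ℝ (fun q => fderiv ℝ w q (1, 0)) p (0, 1)
  rw [fderiv_fderiv_apply h.differentiableAt_fderiv,
    fderiv_fderiv_apply h.differentiableAt_fderiv]
  exact h.isSymmSndFDerivAt minSmoothness_of_isRCLikeNormedField.le _ _

end PartialDerivatives

section VelocityField

variable {Ω : Set (ℝ × ℝ)} {u v : ℝ × ℝ → ℝ} {p : ℝ × ℝ}

theorem pdx_add_pdy_of_potentials {w₀ w₁ w₂ : ℝ × ℝ → ℝ} (h₀ : ContDiffAt ℝ 2 w₀ p)
    (h₁ : ContDiffAt ℝ 2 w₁ p) (h₂ : ContDiffAt ℝ 2 w₂ p) :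
    pdx (fun q => pdx w₀ q + pdx w₁ q + pdy w₂ q) p
        + pdy (fun q => pdy w₀ q - pdy w₁ q - pdx w₂ q) p
      = lap w₀ p + pdx (pdx w₁) p - pdy (pdy w₁) p := by
  have hx₀ := h₀.differentiableAt_pdx
  have hx₁ := h₁.differentiableAt_pdx
  have hx₂ := h₂.differentiableAt_pdx
  have hy₀ := h₀.differentiableAt_pdy
  have hy₁ := h₁.differentiableAt_pdy
  have hy₂ := h₂.differentiableAt_pdy
  rw [pdx_add (hx₀.fun_add hx₁) hy₂, pdx_add hx₀ hx₁, pdy_sub (hy₀.fun_sub hy₁) hx₂,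
    pdy_sub hy₀ hy₁, h₂.pdx_pdy_comm, lap]
  ring

theorem pdy_sub_pdx_of_potentials {w₀ w₁ w₂ : ℝ × ℝ → ℝ} (h₀ : ContDiffAt ℝ 2 w₀ p)
    (h₁ : ContDiffAt ℝ 2 w₁ p) (h₂ : ContDiffAt ℝ 2 w₂ p) :
    pdy (fun q => pdx w₀ q + pdx w₁ q + pdy w₂ q) p
        - pdx (fun q => pdy w₀ q - pdy w₁ q - pdx w₂ q) p
      = lap w₂ p + 2 * pdx (pdy w₁) p := by
  have hx₀ := h₀.differentiableAt_pdx
  have hx₁ := h₁.differentiableAt_pdx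
  have hx₂ := h₂.differentiableAt_pdx
  have hy₀ := h₀.differentiableAt_pdy
  have hy₁ := h₁.differentiableAt_pdy
  have hy₂ := h₂.differentiableAt_pdy
  rw [pdy_add (hx₀.fun_add hx₁) hy₂, pdy_add hx₀ hx₁, pdx_sub (hy₀.fun_sub hy₁) hx₂,
    pdx_sub hy₀ hy₁, h₀.pdx_pdy_comm, h₁.pdx_pdy_comm, lap]
  ring

theorem lap_eq_zero_of_div_curl (hΩ : IsOpen Ω) (hu : ContDiffOn ℝ 2 u Ω)
    (hv : ContDiffOn ℝ 2 v Ω) (hdiv : ∀ q ∈ Ω, pdx u q + pdy v q = 0)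
    (hcurl : ∀ q ∈ Ω, pdy u q = pdx v q) (hp : p ∈ Ω) :
    lap u p = 0 ∧ lap v p = 0 := by
  have hux : Set.EqOn (pdx u) (fun q => -pdy v q) Ω := fun q hq =>
    eq_neg_of_add_eq_zero_left (hdiv q hq)
  have hvy : Set.EqOn (pdy v) (fun q => -pdx u q) Ω := fun q hq =>
    eq_neg_of_add_eq_zero_right (hdiv q hq)
  have huv : Set.EqOn (pdy u) (pdx v) Ω := hcurl
  have hu₂ := hu.contDiffAt (hΩ.mem_nhds hp)
  have hv₂ := hv.contDiffAt (hΩ.mem_nhds hp)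
  constructor
  · rw [lap, hux.pdx_eq hΩ hp, huv.pdy_eq hΩ hp, pdx_neg, hv₂.pdx_pdy_comm, neg_add_cancel]
  · rw [lap, ← huv.pdx_eq hΩ hp, hvy.pdy_eq hΩ hp, pdy_neg, hu₂.pdx_pdy_comm, add_neg_cancel]

theorem fderiv_half_sq_add_sq (hu : DifferentiableAt ℝ u p) (hv : DifferentiableAt ℝ v p)
    (e : ℝ × ℝ) :
    fderiv ℝ (fun q => (u q ^ 2 + v q ^ 2) / 2) p e
      = u p * fderiv ℝ u p e + v p * fderiv ℝ v p e := by
  simp only [div_eq_mul_inv]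
  rw [HasFDerivAt.fderiv
    (HasFDerivAt.mul_const ((hu.hasFDerivAt.pow 2).fun_add (hv.hasFDerivAt.pow 2)) _)]
  simp only [Nat.add_one_sub_one, pow_one, nsmul_eq_mul, Nat.cast_ofNat, smul_add,
    add_apply, smul_apply, smul_eq_mul]
  ring

theorem pdx_sub_half_sq_add_sq {f : ℝ × ℝ → ℝ} (hf : DifferentiableAt ℝ f p)
    (hu : DifferentiableAt ℝ u p) (hv : DifferentiableAt ℝ v p) :
    pdx (fun q => f q - (u q ^ 2 + v q ^ 2) / 2) p
      = pdx f p - (u p * pdx u p + v p * pdx v p) := by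
  rw [pdx_sub hf (by fun_prop)]
  exact congrArg _ (fderiv_half_sq_add_sq hu hv _)

theorem pdy_sub_half_sq_add_sq {f : ℝ × ℝ → ℝ} (hf : DifferentiableAt ℝ f p)
    (hu : DifferentiableAt ℝ u p) (hv : DifferentiableAt ℝ v p) :
    pdy (fun q => f q - (u q ^ 2 + v q ^ 2) / 2) p
      = pdy f p - (u p * pdy u p + v p * pdy v p) := by
  rw [pdy_sub hf (by fun_prop)]
  exact congrArg _ (fderiv_half_sq_add_sq hu hv _)

end VelocityField

theorem exists_pressure_solving_navier_stokes_general
    (Ω : Set (ℝ × ℝ)) (hΩ : IsOpen Ω) (ν : ℝ)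
    (f : ℝ × ℝ → ℝ) (hf : ContDiffOn ℝ 2 f Ω)
    (w₀ w₁ w₂ : ℝ × ℝ → ℝ)
    (hw₀ : ContDiffOn ℝ 4 w₀ Ω) (hw₁ : ContDiffOn ℝ 4 w₁ Ω) (hw₂ : ContDiffOn ℝ 4 w₂ Ω)
    (hφ0 : ∀ p ∈ Ω, lap w₂ p + 2 * pdx (pdy w₁) p = 0)
    (hw0eq : ∀ p ∈ Ω, lap w₀ p + pdx (pdx w₁) p - pdy (pdy w₁) p = 0)
    (u v : ℝ × ℝ → ℝ)
    (hu : ∀ p, u p = pdx w₀ p + pdx w₁ p + pdy w₂ p)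
    (hv : ∀ p, v p = pdy w₀ p - pdy w₁ p - pdx w₂ p) :
    ∃ P : ℝ × ℝ → ℝ, DifferentiableOn ℝ P Ω ∧
      (∀ p ∈ Ω, ν * lap u p - u p * pdx u p - v p * pdy u p - pdx P p + pdx f p = 0) ∧
      (∀ p ∈ Ω, ν * lap v p - u p * pdx v p - v p * pdy v p - pdy P p + pdy f p = 0) ∧
      (∀ p ∈ Ω, pdx u p + pdy v p = 0) := by
  have hC2 : ∀ {w : ℝ × ℝ → ℝ}, ContDiffOn ℝ 4 w Ω → ∀ p ∈ Ω, ContDiffAt ℝ 2 w p :=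
    fun hw p hp => (hw.contDiffAt (hΩ.mem_nhds hp)).of_le (by norm_num)
  have hdiv : ∀ p ∈ Ω, pdx u p + pdy v p = 0 := fun p hp => by
    rw [funext hu, funext hv,
      pdx_add_pdy_of_potentials (hC2 hw₀ p hp) (hC2 hw₁ p hp) (hC2 hw₂ p hp), hw0eq p hp]
  have hcurl : ∀ p ∈ Ω, pdy u p = pdx v p := fun p hp => sub_eq_zero.1 <| by
    rw [funext hu, funext hv,
      pdy_sub_pdx_of_potentials (hC2 hw₀ p hp) (hC2 hw₁ p hp) (hC2 hw₂ p hp), hφ0 p hp]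
  have hle : (2 : WithTop ℕ∞) + 1 ≤ 4 := by norm_num
  have hu₂ : ContDiffOn ℝ 2 u Ω := funext hu ▸
    ((hw₀.pdx hΩ hle).add (hw₁.pdx hΩ hle)).add (hw₂.pdy hΩ hle)
  have hv₂ : ContDiffOn ℝ 2 v Ω := funext hv ▸
    ((hw₀.pdy hΩ hle).sub (hw₁.pdy hΩ hle)).sub (hw₂.pdx hΩ hle)
  have hdiff : ∀ {g : ℝ × ℝ → ℝ}, ContDiffOn ℝ 2 g Ω → ∀ p ∈ Ω, DifferentiableAt ℝ g p :=
    fun hg p hp => (hg.contDiffAt (hΩ.mem_nhds hp)).differentiableAt two_ne_zero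
  refine ⟨fun q => f q - (u q ^ 2 + v q ^ 2) / 2,
    fun p hp => (hdiff ?_ p hp).differentiableWithinAt, fun p hp => ?_, fun p hp => ?_, hdiv⟩
  · exact hf.sub ((hu₂.pow 2).add (hv₂.pow 2) |>.div_const 2)
  · rw [pdx_sub_half_sq_add_sq (hdiff hf p hp) (hdiff hu₂ p hp) (hdiff hv₂ p hp),
      (lap_eq_zero_of_div_curl hΩ hu₂ hv₂ hdiv hcurl hp).1, hcurl p hp]
    ring
  · rw [pdy_sub_half_sq_add_sq (hdiff hf p hp) (hdiff hu₂ p hp) (hdiff hv₂ p hp),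
      (lap_eq_zero_of_div_curl hΩ hu₂ hv₂ hdiv hcurl hp).2, ← hcurl p hp]
    ring

theorem exists_pressure_solving_navier_stokes
    (Ω : Set (ℝ × ℝ)) (hΩ : IsOpen Ω) (hconv : Convex ℝ Ω) (ν : ℝ)
    (f : ℝ × ℝ → ℝ) (hf : ContDiffOn ℝ 2 f Ω)
    (w₀ w₁ w₂ : ℝ × ℝ → ℝ)
    (hw₀ : ContDiffOn ℝ 4 w₀ Ω) (hw₁ : ContDiffOn ℝ 4 w₁ Ω) (hw₂ : ContDiffOn ℝ 4 w₂ Ω)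
    (hφ0 : ∀ p ∈ Ω, lap w₂ p + 2 * pdx (pdy w₁) p = 0)
    (hw0eq : ∀ p ∈ Ω, lap w₀ p + pdx (pdx w₁) p - pdy (pdy w₁) p = 0)
    (u v : ℝ × ℝ → ℝ)
    (hu : ∀ p, u p = pdx w₀ p + pdx w₁ p + pdy w₂ p)
    (hv : ∀ p, v p = pdy w₀ p - pdy w₁ p - pdx w₂ p) :
    ∃ P : ℝ × ℝ → ℝ, DifferentiableOn ℝ P Ω ∧
      (∀ p ∈ Ω, ν * lap u p - u p * pdx u p - v p * pdy u p - pdx P p + pdx f p = 0) ∧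
      (∀ p ∈ Ω, ν * lap v p - u p * pdx v p - v p * pdy v p - pdy P p + pdy f p = 0) ∧
      (∀ p ∈ Ω, pdx u p + pdy v p = 0) :=
  exists_pressure_solving_navier_stokes_general Ω hΩ ν f hf w₀ w₁ w₂ hw₀ hw₁ hw₂ hφ0 hw0eq u v hu hv
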